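/- arXiv:math/0612806 — 3 statements merged into one kernel-verified Lean document; each statement's English description precedes it below -/
import Mathlib

section
/- Let H be a Hopf 𝒢-algebra in a braided monoidal category and let L be a right integral of H. Then the family {S_g ∘ L_g : 𝟙 → H_ḡ}_{g ∈ 𝒢} is a left integral of H, i.e. writing L'_g = S_ḡ ∘ L_ḡ : 𝟙 → H_g, one has m_{g,h} ∘ (id_{H_g} ⊗ L'_h) = L'_{gh} ∘ ε_g whenever gh is defined. -/
/-!
Write `x : H_g` as `S_ḡ (S̄_g x)`. The antipode is anti-multiplicative up to the braiding, so
`x · S(L_h̄) = S(L_h̄ · S̄_g x)`, and the right integral property turns this into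
`ε(S̄_g x) · S(L_{h̄ḡ}) = ε(x) · S(L_{(gh)⁻¹})`.

Anti-multiplicativity is a convolution argument (`conv`, written `⋆`) on the comonoid
`H_g ⊗ H_h`: `S ∘ m` is a left convolution inverse of `m` because `m` is a comonoid morphism,
and `(S ⊗ S) ≫ γ ≫ m` is a right one because it is `(snd ≫ S) ⋆ (fst ≫ S)` while
`m = fst ⋆ snd`, with `fst`, `snd` comonoid morphisms.
-/

open CategoryTheory MonoidalCategory

universe w₁ w₂ v u

namespace HopfPaper

section Groupoids

variable {G : Type w₂} [Groupoid.{w₁} G]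

@[simp] lemma ginv_inv {i j : G} (g : i ⟶ j) : Groupoid.inv (Groupoid.inv g) = g := by
  simp [Groupoid.inv_eq_inv]

@[simp] lemma ginv_id (i : G) : Groupoid.inv (𝟙 i) = 𝟙 i := by
  simp [Groupoid.inv_eq_inv]

@[simp] lemma ginv_comp {i j k : G} (g : i ⟶ j) (h : j ⟶ k) :
    Groupoid.inv (g ≫ h) = Groupoid.inv h ≫ Groupoid.inv g := by
  simp [Groupoid.inv_eq_inv]

@[simp] lemma ginv_comp_self_assoc {i j : G} (g : i ⟶ j) {k : G} (t : j ⟶ k) :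
    Groupoid.inv g ≫ g ≫ t = t := by
  rw [← Category.assoc, Groupoid.inv_comp, Category.id_comp]

@[simp] lemma gcomp_inv_self_assoc {i j : G} (g : i ⟶ j) {k : G} (t : i ⟶ k) :
    g ≫ Groupoid.inv g ≫ t = t := by
  rw [← Category.assoc, Groupoid.comp_inv, Category.id_comp]

@[simp] lemma ginv_eqToHom {i j : G} (e : i = j) :
    Groupoid.inv (eqToHom e) = eqToHom e.symm := by
  subst e; simp [Groupoid.inv_eq_inv]

end Groupoids

section MidSwap

variable {C : Type u} [Category.{v} C] [MonoidalCategory C] [BraidedCategory C]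

/-- The middle-four interchange `(X ⊗ Y) ⊗ (Z ⊗ W) ⟶ (X ⊗ Z) ⊗ (Y ⊗ W)`, braiding the two
middle factors (the implicit `id ⊗ γ ⊗ id` of the paper). -/
def midSwap (X Y Z W : C) : (X ⊗ Y) ⊗ (Z ⊗ W) ⟶ (X ⊗ Z) ⊗ (Y ⊗ W) :=
  (α_ X Y (Z ⊗ W)).hom ≫ (X ◁ (α_ Y Z W).inv) ≫ (X ◁ ((β_ Y Z).hom ▷ W)) ≫
    (X ◁ (α_ Z Y W).hom) ≫ (α_ X Z (Y ⊗ W)).inv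

end MidSwap

/-- A Hopf `G`-algebra in a braided monoidal category `C` (Bobtcheva–Piergallini).
Composition is written in diagrammatic order (`f ≫ g` is "`g ∘ f`"), and `eqToHom`s are
inserted where the paper identifies equal objects. -/
structure HopfG (G : Type w₂) [Groupoid.{w₁} G]
    (C : Type u) [Category.{v} C] [MonoidalCategory C] [BraidedCategory C] where
  /-- the underlying family of objects, indexed by the morphisms of `G` -/
  H : ∀ {i j : G}, (i ⟶ j) → C
  /-- comultiplication -/
  Δ : ∀ {i j : G} (g : i ⟶ j), H g ⟶ H g ⊗ H g
  /-- counit -/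
  ε : ∀ {i j : G} (g : i ⟶ j), H g ⟶ 𝟙_ C
  /-- multiplication -/
  mul : ∀ {i j k : G} (g : i ⟶ j) (h : j ⟶ k), H g ⊗ H h ⟶ H (g ≫ h)
  /-- unit -/
  η : ∀ i : G, 𝟙_ C ⟶ H (𝟙 i)
  /-- antipode -/
  S : ∀ {i j : G} (g : i ⟶ j), H g ⟶ H (Groupoid.inv g)
  /-- inverse of the antipode -/
  Sbar : ∀ {i j : G} (g : i ⟶ j), H g ⟶ H (Groupoid.inv g)
  /-- (a1) coassociativity -/
  coassoc : ∀ {i j : G} (g : i ⟶ j),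
    Δ g ≫ (Δ g ▷ H g) ≫ (α_ (H g) (H g) (H g)).hom = Δ g ≫ (H g ◁ Δ g)
  /-- (a2) counit -/
  counit_l : ∀ {i j : G} (g : i ⟶ j), Δ g ≫ (ε g ▷ H g) ≫ (λ_ (H g)).hom = 𝟙 (H g)
  /-- (a2') counit -/
  counit_r : ∀ {i j : G} (g : i ⟶ j), Δ g ≫ (H g ◁ ε g) ≫ (ρ_ (H g)).hom = 𝟙 (H g)
  /-- (a3) associativity of multiplication -/
  mul_assoc : ∀ {i j k l : G} (f : i ⟶ j) (g : j ⟶ k) (h : k ⟶ l),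
    (mul f g ▷ H h) ≫ mul (f ≫ g) h =
      (α_ (H f) (H g) (H h)).hom ≫ (H f ◁ mul g h) ≫ mul f (g ≫ h) ≫
        eqToHom (by rw [Category.assoc])
  /-- (a5) compatibility of multiplication and comultiplication -/
  Δ_mul : ∀ {i j k : G} (g : i ⟶ j) (h : j ⟶ k),
    mul g h ≫ Δ (g ≫ h) =
      (Δ g ⊗ₘ Δ h) ≫ midSwap (H g) (H g) (H h) (H h) ≫ (mul g h ⊗ₘ mul g h)
  /-- (a6) -/
  ε_mul : ∀ {i j k : G} (g : i ⟶ j) (h : j ⟶ k),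
    mul g h ≫ ε (g ≫ h) = (ε g ⊗ₘ ε h) ≫ (λ_ (𝟙_ C)).hom
  /-- (a4) right unit -/
  mul_one : ∀ {i j : G} (g : i ⟶ j),
    (H g ◁ η j) ≫ mul g (𝟙 j) ≫ eqToHom (by rw [Category.comp_id]) = (ρ_ (H g)).hom
  /-- (a4') left unit -/
  one_mul : ∀ {i j : G} (g : i ⟶ j),
    (η i ▷ H g) ≫ mul (𝟙 i) g ≫ eqToHom (by rw [Category.id_comp]) = (λ_ (H g)).hom
  /-- (a7) -/
  Δ_one : ∀ i : G, η i ≫ Δ (𝟙 i) = (λ_ (𝟙_ C)).inv ≫ (η i ⊗ₘ η i)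
  /-- (a8) -/
  ε_one : ∀ i : G, η i ≫ ε (𝟙 i) = 𝟙 (𝟙_ C)
  /-- (s1) -/
  antipode_l : ∀ {i j : G} (g : i ⟶ j),
    Δ g ≫ (S g ▷ H g) ≫ mul (Groupoid.inv g) g ≫ eqToHom (by rw [Groupoid.inv_comp]) =
      ε g ≫ η j
  /-- (s1') -/
  antipode_r : ∀ {i j : G} (g : i ⟶ j),
    Δ g ≫ (H g ◁ S g) ≫ mul g (Groupoid.inv g) ≫ eqToHom (by rw [Groupoid.comp_inv]) =
      ε g ≫ η i
  /-- (s2) `S̄_ḡ ∘ S_g = id` -/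
  S_Sbar : ∀ {i j : G} (g : i ⟶ j),
    S g ≫ Sbar (Groupoid.inv g) ≫ eqToHom (by rw [ginv_inv]) = 𝟙 (H g)
  /-- (s2') `S_ḡ ∘ S̄_g = id` -/
  Sbar_S : ∀ {i j : G} (g : i ⟶ j),
    Sbar g ≫ S (Groupoid.inv g) ≫ eqToHom (by rw [ginv_inv]) = 𝟙 (H g)

namespace HopfG

variable {G : Type w₂} [Groupoid.{w₁} G]
variable {C : Type u} [Category.{v} C] [MonoidalCategory C] [BraidedCategory C]
variable (D : HopfG G C)

lemma H_eq {a b a' b' : G} (f : a ⟶ b) (f' : a' ⟶ b')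
    (ha : a = a') (hb : b = b') (h : f = eqToHom ha ≫ f' ≫ eqToHom hb.symm) :
    D.H f = D.H f' := by
  subst ha; subst hb
  simp only [eqToHom_refl, Category.comp_id, Category.id_comp] at h
  rw [h]

/-- a left cointegral of `H` -/
def IsLeftCointegral (l : ∀ i : G, D.H (𝟙 i) ⟶ 𝟙_ C) : Prop :=
  ∀ i : G, D.Δ (𝟙 i) ≫ (D.H (𝟙 i) ◁ l i) ≫ (ρ_ (D.H (𝟙 i))).hom = l i ≫ D.η i

/-- a right cointegral of `H` -/
def IsRightCointegral (l : ∀ i : G, D.H (𝟙 i) ⟶ 𝟙_ C) : Prop :=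
  ∀ i : G, D.Δ (𝟙 i) ≫ (l i ▷ D.H (𝟙 i)) ≫ (λ_ (D.H (𝟙 i))).hom = l i ≫ D.η i

/-- a right integral of `H` -/
def IsRightIntegral (L : ∀ {i j : G} (g : i ⟶ j), 𝟙_ C ⟶ D.H g) : Prop :=
  ∀ (i j k : G) (g : i ⟶ j) (h : j ⟶ k),
    (λ_ (D.H h)).inv ≫ (L g ▷ D.H h) ≫ D.mul g h = D.ε h ≫ L (g ≫ h)

/-- a left integral of `H` -/
def IsLeftIntegral (L : ∀ {i j : G} (g : i ⟶ j), 𝟙_ C ⟶ D.H g) : Prop :=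
  ∀ (i j k : G) (g : i ⟶ j) (h : j ⟶ k),
    (ρ_ (D.H g)).inv ≫ (D.H g ◁ L h) ≫ D.mul g h = D.ε g ≫ L (g ≫ h)

/-- the coform `Λ_g = Δ_g ∘ L_g` -/
def coform (L : ∀ {i j : G} (g : i ⟶ j), 𝟙_ C ⟶ D.H g) {i j : G} (g : i ⟶ j) :
    𝟙_ C ⟶ D.H g ⊗ D.H g := L g ≫ D.Δ g

/-- the form `λ_g = l_i ∘ m_{g,ḡ} ∘ (id ⊗ S_g)` -/
def form (l : ∀ i : G, D.H (𝟙 i) ⟶ 𝟙_ C) {i j : G} (g : i ⟶ j) :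
    D.H g ⊗ D.H g ⟶ 𝟙_ C :=
  (D.H g ◁ D.S g) ≫ D.mul g (Groupoid.inv g) ≫ eqToHom (by rw [Groupoid.comp_inv]) ≫ l i

end HopfG

end HopfPaper

namespace HopfPaper

open HopfG

variable {G : Type w₂} [Groupoid.{w₁} G]
variable {C : Type u} [Category.{v} C] [MonoidalCategory C] [BraidedCategory C]

open ComonObj

section TensorProjections

def tensorFst (A B : C) [ComonObj B] : A ⊗ B ⟶ A := A ◁ ε[B] ≫ (ρ_ A).hom

def tensorSnd (A B : C) [ComonObj A] : A ⊗ B ⟶ B := ε[A] ▷ B ≫ (λ_ B).hom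

variable (A B : C) [ComonObj A] [ComonObj B]

instance : IsComonHom (tensorFst A B) where
  hom_counit := by
    rw [tensorFst, Comon.tensorObj_counit, Category.assoc, ← rightUnitor_naturality,
      whisker_exchange_assoc, tensorHom_def_assoc, unitors_equal]
  hom_comul := by
    simp only [Comon.tensorObj_comul, tensorFst, Category.assoc]
    rw [← tensorHom_comp_tensorHom, ← id_tensorHom, ← tensorμ_natural_assoc,
      tensorHom_comp_tensorHom_assoc, id_tensorHom_id, Category.comp_id, counit_comul_hom,
      ← rightUnitor_naturality, id_tensorHom, whisker_exchange_assoc]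
    simp only [tensorμ, braiding_tensorUnit_right, MonoidalCategory.tensorHom_def]
    monoidal

instance : IsComonHom (tensorSnd A B) where
  hom_counit := by
    rw [tensorSnd, Comon.tensorObj_counit, Category.assoc, ← leftUnitor_naturality,
      ← tensorHom_def_assoc]
  hom_comul := by
    simp only [Comon.tensorObj_comul, tensorSnd, Category.assoc]
    rw [← tensorHom_comp_tensorHom, ← tensorHom_id, ← tensorμ_natural_assoc,
      tensorHom_comp_tensorHom_assoc, id_tensorHom_id, Category.comp_id, counit_comul_hom,
      ← leftUnitor_naturality, tensorHom_id, ← whisker_exchange_assoc]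
    simp only [tensorμ, braiding_tensorUnit_left, tensorHom_def']
    monoidal

lemma comul_tensorFst_tensorSnd : Δ[A ⊗ B] ≫ (tensorFst A B ⊗ₘ tensorSnd A B) = 𝟙 _ := by
  simp only [Comon.tensorObj_comul, tensorFst, tensorSnd, Category.assoc]
  rw [← tensorHom_comp_tensorHom, ← id_tensorHom, ← tensorHom_id, ← tensorμ_natural_assoc,
    tensorHom_comp_tensorHom_assoc, comul_counit_hom, counit_comul_hom]
  simp only [tensorμ, braiding_tensorUnit_left]
  monoidal

lemma comul_tensorSnd_tensorFst :
    Δ[A ⊗ B] ≫ (tensorSnd A B ⊗ₘ tensorFst A B) = (β_ A B).hom := by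
  simp only [Comon.tensorObj_comul, tensorFst, tensorSnd, Category.assoc]
  rw [← tensorHom_comp_tensorHom, ← id_tensorHom, ← tensorHom_id, ← tensorμ_natural_assoc,
    tensorHom_comp_tensorHom_assoc, comul_counit_hom, counit_comul_hom]
  simp only [tensorμ]
  monoidal

end TensorProjections

lemma rightUnitor_inv_tensorHom_swap {P A B : C} (f : P ⟶ A) (t : 𝟙_ C ⟶ B) :
    (ρ_ P).inv ≫ (f ⊗ₘ t) = (λ_ P).inv ≫ (t ⊗ₘ f) ≫ (β_ B A).hom := by
  rw [BraidedCategory.braiding_naturality, braiding_tensorUnit_left]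
  simp

namespace HopfG

variable (D : HopfG G C) {i j k l : G}

instance comonObj (g : i ⟶ j) : ComonObj (D.H g) where
  counit := D.ε g
  comul := D.Δ g
  counit_comul := by rw [← cancel_mono (λ_ (D.H g)).hom]; simpa using D.counit_l g
  comul_counit := by rw [← cancel_mono (ρ_ (D.H g)).hom]; simpa using D.counit_r g
  comul_assoc := by simpa using (D.coassoc g).symm

lemma counit_eq (g : i ⟶ j) : ε[D.H g] = D.ε g := rfl

lemma comul_eq (g : i ⟶ j) : Δ[D.H g] = D.Δ g := rfl

instance (g : i ⟶ j) (h : j ⟶ k) : IsComonHom (D.mul g h) where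
  hom_counit := D.ε_mul g h
  hom_comul := by
    simp only [Comon.tensorObj_comul, comul_eq, Category.assoc]
    exact D.Δ_mul g h

lemma η_whiskerRight_mul (g : i ⟶ j) :
    (D.η i ▷ D.H g) ≫ D.mul (𝟙 i) g = (λ_ (D.H g)).hom ≫ eqToHom (by rw [Category.id_comp]) := by
  rw [← D.one_mul g]; simp

lemma whiskerLeft_η_mul (g : i ⟶ j) :
    (D.H g ◁ D.η j) ≫ D.mul g (𝟙 j) = (ρ_ (D.H g)).hom ≫ eqToHom (by rw [Category.comp_id]) := by
  rw [← D.mul_one g]; simp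

lemma eqToHom_comp_ε {f f' : i ⟶ j} (hf : f = f') :
    eqToHom (by rw [hf]) ≫ D.ε f' = D.ε f := by
  subst hf; simp

lemma eqToHom_tensorHom_eqToHom_mul {p p' : i ⟶ j} {q q' : j ⟶ k} (hp : p = p') (hq : q = q') :
    (eqToHom (by rw [hp]) ⊗ₘ eqToHom (by rw [hq])) ≫ D.mul p' q' =
      D.mul p q ≫ eqToHom (by rw [hp, hq]) := by
  subst hp hq; simp

lemma L_comp_S_congr (L : ∀ {a b : G} (f : a ⟶ b), 𝟙_ C ⟶ D.H f) {f f' : i ⟶ j}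
    (hf : f = f') {T : C} (e : D.H (Groupoid.inv f) = T) (e' : D.H (Groupoid.inv f') = T) :
    L f ≫ D.S f ≫ eqToHom e = L f' ≫ D.S f' ≫ eqToHom e' := by
  subst hf; rfl

section Convolution

variable {A : C} [ComonObj A]

def conv {p : i ⟶ j} {q : j ⟶ k} (f : A ⟶ D.H p) (f' : A ⟶ D.H q) : A ⟶ D.H (p ≫ q) :=
  Δ[A] ≫ (f ⊗ₘ f') ≫ D.mul p q

lemma conv_eqToHom_left {p p' : i ⟶ j} {q : j ⟶ k} (hp : p = p') (f : A ⟶ D.H p)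
    (f' : A ⟶ D.H q) :
    D.conv (f ≫ eqToHom (by rw [hp])) f' = D.conv f f' ≫ eqToHom (by rw [hp]) := by
  subst hp; simp

lemma conv_eqToHom_right {p : i ⟶ j} {q q' : j ⟶ k} (hq : q = q') (f : A ⟶ D.H p)
    (f' : A ⟶ D.H q) :
    D.conv f (f' ≫ eqToHom (by rw [hq])) = D.conv f f' ≫ eqToHom (by rw [hq]) := by
  subst hq; simp

lemma one_conv {q : j ⟶ k} (f : A ⟶ D.H q) :
    D.conv (ε[A] ≫ D.η j) f = f ≫ eqToHom (by rw [Category.id_comp]) := by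
  rw [conv, tensorHom_def', Category.assoc, comp_whiskerRight_assoc, D.η_whiskerRight_mul,
    whisker_exchange_assoc, counit_comul_assoc, leftUnitor_naturality_assoc,
    Iso.inv_hom_id_assoc]

lemma conv_one {p : i ⟶ j} (f : A ⟶ D.H p) :
    D.conv f (ε[A] ≫ D.η j) = f ≫ eqToHom (by rw [Category.comp_id]) := by
  rw [conv, MonoidalCategory.tensorHom_def, Category.assoc, MonoidalCategory.whiskerLeft_comp_assoc,
    D.whiskerLeft_η_mul, ← whisker_exchange_assoc, comul_counit_assoc,
    rightUnitor_naturality_assoc, Iso.inv_hom_id_assoc]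

lemma conv_assoc {p : i ⟶ j} {q : j ⟶ k} {r : k ⟶ l} (f : A ⟶ D.H p) (f' : A ⟶ D.H q)
    (f'' : A ⟶ D.H r) :
    D.conv (D.conv f f') f'' = D.conv f (D.conv f' f'') ≫ eqToHom (by rw [Category.assoc]) := by
  have hl : (Δ[A] ≫ (f ⊗ₘ f') ≫ D.mul p q) ⊗ₘ f'' =
      (Δ[A] ▷ A) ≫ ((f ⊗ₘ f') ⊗ₘ f'') ≫ (D.mul p q ▷ D.H r) := by
    rw [← tensorHom_id, ← tensorHom_id, tensorHom_comp_tensorHom, tensorHom_comp_tensorHom]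
    simp
  have hr : f ⊗ₘ (Δ[A] ≫ (f' ⊗ₘ f'') ≫ D.mul q r) =
      (A ◁ Δ[A]) ≫ (f ⊗ₘ (f' ⊗ₘ f'')) ≫ (D.H p ◁ D.mul q r) := by
    rw [← id_tensorHom, ← id_tensorHom, tensorHom_comp_tensorHom, tensorHom_comp_tensorHom]
    simp
  simp only [conv, hl, hr, Category.assoc, D.mul_assoc, associator_naturality_assoc,
    comul_assoc_assoc]

lemma conv_assoc' {p : i ⟶ j} {q : j ⟶ k} {r : k ⟶ l} (f : A ⟶ D.H p) (f' : A ⟶ D.H q)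
    (f'' : A ⟶ D.H r) :
    D.conv f (D.conv f' f'') = D.conv (D.conv f f') f'' ≫ eqToHom (by rw [Category.assoc]) := by
  simp [conv_assoc]

lemma conv_comp {B : C} [ComonObj B] (φ : A ⟶ B) [IsComonHom φ] {p : i ⟶ j} {q : j ⟶ k}
    (f : B ⟶ D.H p) (f' : B ⟶ D.H q) : D.conv (φ ≫ f) (φ ≫ f') = φ ≫ D.conv f f' := by
  rw [conv, conv, ← tensorHom_comp_tensorHom, IsComonHom.hom_comul_assoc, Category.assoc]

lemma conv_comp_ε {p : i ⟶ j} {q : j ⟶ k} (f : A ⟶ D.H p) (f' : A ⟶ D.H q) :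
    D.conv f f' ≫ D.ε (p ≫ q) = Δ[A] ≫ ((f ≫ D.ε p) ⊗ₘ (f' ≫ D.ε q)) ≫ (λ_ _).hom := by
  simp [conv, D.ε_mul]

lemma conv_left_inv_eq_right_inv {p : i ⟶ j} (a : A ⟶ D.H p) (u v : A ⟶ D.H (Groupoid.inv p))
    (hu : D.conv u a = ε[A] ≫ D.η j ≫ eqToHom (by rw [Groupoid.inv_comp]))
    (hv : D.conv a v = ε[A] ≫ D.η i ≫ eqToHom (by rw [Groupoid.comp_inv])) :
    u = v := by
  have hu' : D.conv (D.conv u a) v = v ≫ eqToHom (by simp) := by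
    rw [hu, ← Category.assoc ε[A], D.conv_eqToHom_left (Groupoid.inv_comp p).symm, D.one_conv]
    simp
  have hv' : D.conv u (D.conv a v) = u ≫ eqToHom (by simp) := by
    rw [hv, ← Category.assoc ε[A], D.conv_eqToHom_right (Groupoid.comp_inv p).symm, D.conv_one]
    simp
  rw [D.conv_assoc, hv', Category.assoc u, eqToHom_trans] at hu'
  exact (cancel_mono _).1 hu'

end Convolution

lemma conv_id_S (g : i ⟶ j) :
    D.conv (𝟙 (D.H g)) (D.S g) = ε[D.H g] ≫ D.η i ≫ eqToHom (by rw [Groupoid.comp_inv]) := by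
  rw [counit_eq, ← reassoc_of% D.antipode_r g]
  simp [conv, comul_eq]

lemma conv_S_id (g : i ⟶ j) :
    D.conv (D.S g) (𝟙 (D.H g)) = ε[D.H g] ≫ D.η j ≫ eqToHom (by rw [Groupoid.inv_comp]) := by
  rw [counit_eq, ← reassoc_of% D.antipode_l g]
  simp [conv, comul_eq]

lemma conv_self_comp_S {A : C} [ComonObj A] {g : i ⟶ j} (φ : A ⟶ D.H g) [IsComonHom φ] :
    D.conv φ (φ ≫ D.S g) = ε[A] ≫ D.η i ≫ eqToHom (by rw [Groupoid.comp_inv]) := by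
  have h := D.conv_comp φ (𝟙 _) (D.S g)
  rwa [Category.comp_id φ, conv_id_S, IsComonHom.hom_counit_assoc] at h

lemma conv_comp_S_self {A : C} [ComonObj A] {g : i ⟶ j} (φ : A ⟶ D.H g) [IsComonHom φ] :
    D.conv (φ ≫ D.S g) φ = ε[A] ≫ D.η j ≫ eqToHom (by rw [Groupoid.inv_comp]) := by
  have h := D.conv_comp φ (D.S g) (𝟙 _)
  rwa [Category.comp_id φ, conv_S_id, IsComonHom.hom_counit_assoc] at h

lemma mul_eq_conv (g : i ⟶ j) (h : j ⟶ k) :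
    D.mul g h = D.conv (tensorFst (D.H g) (D.H h)) (tensorSnd (D.H g) (D.H h)) := by
  rw [conv, reassoc_of% comul_tensorFst_tensorSnd]

lemma conv_tensorSnd_S_tensorFst_S (g : i ⟶ j) (h : j ⟶ k) :
    D.conv (tensorSnd (D.H g) (D.H h) ≫ D.S h) (tensorFst (D.H g) (D.H h) ≫ D.S g) =
      (D.S g ⊗ₘ D.S h) ≫ (β_ _ _).hom ≫ D.mul (Groupoid.inv h) (Groupoid.inv g) := by
  rw [conv, ← tensorHom_comp_tensorHom, Category.assoc, reassoc_of% comul_tensorSnd_tensorFst,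
    BraidedCategory.braiding_naturality_assoc]

theorem mul_S (g : i ⟶ j) (h : j ⟶ k) :
    D.mul g h ≫ D.S (g ≫ h) ≫ eqToHom (by rw [ginv_comp]) =
      (D.S g ⊗ₘ D.S h) ≫ (β_ _ _).hom ≫ D.mul (Groupoid.inv h) (Groupoid.inv g) := by
  rw [← Category.assoc (D.mul g h), comp_eqToHom_iff, ← D.conv_tensorSnd_S_tensorFst_S]
  apply D.conv_left_inv_eq_right_inv (D.mul g h)
  · exact D.conv_comp_S_self (D.mul g h)
  · rw [D.conv_eqToHom_right (ginv_comp g h).symm, mul_eq_conv, D.conv_assoc,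
      D.conv_assoc' (tensorSnd _ _), D.conv_self_comp_S, ← Category.assoc ε[_],
      D.conv_eqToHom_left (Groupoid.comp_inv h).symm, D.one_conv]
    simp only [Category.assoc (tensorFst _ _ ≫ D.S g), eqToHom_trans]
    rw [D.conv_eqToHom_right (gcomp_inv_self_assoc h _).symm, D.conv_self_comp_S]
    simp

lemma S_ε (g : i ⟶ j) : D.S g ≫ D.ε (Groupoid.inv g) = D.ε g := by
  have h := congrArg (· ≫ D.ε _) (D.conv_S_id g)
  simp only [conv_comp_ε, Category.id_comp, Category.assoc,
    D.eqToHom_comp_ε (Groupoid.inv_comp g).symm, ε_one, Category.comp_id] at h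
  rwa [← D.counit_eq g, comul_counit_hom_assoc, unitors_equal, Iso.inv_hom_id,
    Category.comp_id] at h

lemma Sbar_ε (g : i ⟶ j) : D.Sbar g ≫ D.ε (Groupoid.inv g) = D.ε g := by
  conv_rhs => rw [← Category.id_comp (D.ε g), ← D.Sbar_S g]
  rw [Category.assoc, Category.assoc, D.eqToHom_comp_ε (ginv_inv g), D.S_ε]

variable {D} in
theorem IsRightIntegral.S_mul_S {L : ∀ {a b : G} (f : a ⟶ b), 𝟙_ C ⟶ D.H f}
    (hL : D.IsRightIntegral L) (g : j ⟶ i) (h : k ⟶ j) :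
    (ρ_ _).inv ≫ (D.S g ⊗ₘ (L h ≫ D.S h)) ≫ D.mul (Groupoid.inv g) (Groupoid.inv h) =
      D.ε g ≫ L (h ≫ g) ≫ D.S (h ≫ g) ≫ eqToHom (by rw [ginv_comp]) := by
  rw [reassoc_of% rightUnitor_inv_tensorHom_swap, ← Category.id_comp (D.S g),
    ← tensorHom_comp_tensorHom_assoc, ← D.mul_S, tensorHom_id, reassoc_of% (hL _ _ _ h g)]

end HopfG

/-- if `L` is a right integral of the Hopf `𝒢`-algebra `H`, then the family
`L'_g = S_ḡ ∘ L_ḡ` is a left integral of `H`. -/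
theorem rightIntegral_comp_antipode_isLeftIntegral
    (D : HopfG G C) (L : ∀ {i j : G} (g : i ⟶ j), 𝟙_ C ⟶ D.H g)
    (hL : D.IsRightIntegral L) :
    D.IsLeftIntegral (fun {i j} (g : i ⟶ j) =>
      L (Groupoid.inv g) ≫ D.S (Groupoid.inv g) ≫ eqToHom (by rw [ginv_inv])) := by
  intro i j k g h
  have key := D.Sbar g ≫= hL.S_mul_S (Groupoid.inv g) (Groupoid.inv h) =≫
    eqToHom (show D.H (Groupoid.inv (Groupoid.inv g) ≫ Groupoid.inv (Groupoid.inv h)) =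
      D.H (g ≫ h) by rw [ginv_inv, ginv_inv])
  simp only [Category.assoc] at key
  rw [← D.eqToHom_tensorHom_eqToHom_mul (ginv_inv g) (ginv_inv h), reassoc_of% D.Sbar_ε,
    tensorHom_comp_tensorHom_assoc, rightUnitor_inv_comp_tensorHom_assoc, Category.assoc,
    reassoc_of% D.Sbar_S, Category.assoc (L _)] at key
  rw [key, eqToHom_trans, D.L_comp_S_congr L (ginv_comp g h).symm]

end HopfPaper
end

section
/- Let H be a selfdual ribbon Hopf 𝒢-algebra in a braided monoidal category, i.e. a ribbon Hopf 𝒢-algebra satisfying (l_i ⊗ id) ∘ σ_{i,i} = L_{1_i} for every object i of 𝒢. If l_i ∘ v_{1_i} ∘ η_i = id_𝟙 for every object i (axiom (d2)), then also l_i ∘ v_{1_i}^{-1} ∘ η_i = id_𝟙 for every object i (axiom (d2')). -/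
open CategoryTheory MonoidalCategory

universe w₁ w₂ v u

namespace HopfPaper

variable {G : Type w₂} [Groupoid.{w₁} G]
variable {C : Type u} [Category.{v} C] [MonoidalCategory C] [BraidedCategory C]

/-- `μ_{g,h} = (m_{g,1_i} ⊗ m_{1_j,h}) ∘ (id ⊗ σ_{i,j} ⊗ id)` for `g` with target `i` and
`h` with source `j`. -/
def muDef (D : HopfG G C) (σ : ∀ i j : G, 𝟙_ C ⟶ D.H (𝟙 i) ⊗ D.H (𝟙 j))
    {a i j b : G} (g : a ⟶ i) (h : j ⟶ b) : D.H g ⊗ D.H h ⟶ D.H g ⊗ D.H h :=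
  (D.H g ◁ (λ_ (D.H h)).inv) ≫ (D.H g ◁ (σ i j ▷ D.H h)) ≫
    (D.H g ◁ (α_ (D.H (𝟙 i)) (D.H (𝟙 j)) (D.H h)).hom) ≫
    (α_ (D.H g) (D.H (𝟙 i)) (D.H (𝟙 j) ⊗ D.H h)).inv ≫
    ((D.mul g (𝟙 i) ≫ eqToHom (by rw [Category.comp_id])) ⊗ₘ
      (D.mul (𝟙 j) h ≫ eqToHom (by rw [Category.id_comp])))

/-- `ρ^r_{h,k} = (m_{h,1_b} ⊗ id) ∘ (id ⊗ σ_{b,k})` for `h : a ⟶ b`. -/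
def rhoR (D : HopfG G C) (σ : ∀ i j : G, 𝟙_ C ⟶ D.H (𝟙 i) ⊗ D.H (𝟙 j))
    {a b : G} (h : a ⟶ b) (k : G) : D.H h ⟶ D.H h ⊗ D.H (𝟙 k) :=
  (ρ_ (D.H h)).inv ≫ (D.H h ◁ σ b k) ≫ (α_ (D.H h) (D.H (𝟙 b)) (D.H (𝟙 k))).inv ≫
    ((D.mul h (𝟙 b) ≫ eqToHom (by rw [Category.comp_id])) ▷ D.H (𝟙 k))

/-- `ρ^l_{h,k} = (id ⊗ m_{1_a,h}) ∘ (σ_{k,a} ⊗ id)` for `h : a ⟶ b`. -/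
def rhoL (D : HopfG G C) (σ : ∀ i j : G, 𝟙_ C ⟶ D.H (𝟙 i) ⊗ D.H (𝟙 j))
    (k : G) {a b : G} (h : a ⟶ b) : D.H h ⟶ D.H (𝟙 k) ⊗ D.H h :=
  (λ_ (D.H h)).inv ≫ (σ k a ▷ D.H h) ≫ (α_ (D.H (𝟙 k)) (D.H (𝟙 a)) (D.H h)).hom ≫
    (D.H (𝟙 k) ◁ (D.mul (𝟙 a) h ≫ eqToHom (by rw [Category.id_comp])))

/-- A ribbon Hopf `𝒢`-algebra: a unimodular Hopf `𝒢`-algebra with ribbon morphisms `v` and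
the induced copairings `σ` satisfying the axioms (r1)–(r11) of Bobtcheva–Piergallini. -/
structure RibbonG (G : Type w₂) [Groupoid.{w₁} G]
    (C : Type u) [Category.{v} C] [MonoidalCategory C] [BraidedCategory C]
    extends HopfG G C where
  /-- left cointegral -/
  l : ∀ i : G, H (𝟙 i) ⟶ 𝟙_ C
  /-- two-sided integral -/
  L : ∀ {i j : G} (g : i ⟶ j), 𝟙_ C ⟶ H g
  /-- (i1) `l` is a left cointegral -/
  l_coint : ∀ i : G, Δ (𝟙 i) ≫ (H (𝟙 i) ◁ l i) ≫ (ρ_ (H (𝟙 i))).hom = l i ≫ η i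
  /-- (i2) `L` is a right integral -/
  L_int : ∀ (i j k : G) (g : i ⟶ j) (h : j ⟶ k),
    (λ_ (H h)).inv ≫ (L g ▷ H h) ≫ mul g h = ε h ≫ L (g ≫ h)
  /-- (i3) -/
  lL : ∀ i : G, L (𝟙 i) ≫ l i = 𝟙 (𝟙_ C)
  /-- (i3') -/
  lSL : ∀ i : G, L (𝟙 i) ≫ S (𝟙 i) ≫ eqToHom (by rw [ginv_id]) ≫ l i = 𝟙 (𝟙_ C)
  /-- (i4) `S`-invariance of the integral -/
  SL : ∀ {i j : G} (g : i ⟶ j), L g ≫ S g = L (Groupoid.inv g)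
  /-- (i5) `S`-invariance of the cointegral -/
  lS : ∀ i : G, S (𝟙 i) ≫ eqToHom (by rw [ginv_id]) ≫ l i = l i
  /-- the ribbon morphism -/
  v : ∀ {i j : G} (g : i ⟶ j), H g ⟶ H g
  /-- the inverse of the ribbon morphism -/
  vinv : ∀ {i j : G} (g : i ⟶ j), H g ⟶ H g
  v_vinv : ∀ {i j : G} (g : i ⟶ j), v g ≫ vinv g = 𝟙 (H g)
  vinv_v : ∀ {i j : G} (g : i ⟶ j), vinv g ≫ v g = 𝟙 (H g)
  /-- (r2) `ε`-invariance -/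
  v_ε : ∀ {i j : G} (g : i ⟶ j), v g ≫ ε g = ε g
  /-- (r3) `L`-invariance -/
  v_L : ∀ {i j : G} (g : i ⟶ j), L g ≫ v g = L g
  /-- (r4) `S`-invariance -/
  v_S : ∀ {i j : G} (g : i ⟶ j), v g ≫ S g = S g ≫ v (Groupoid.inv g)
  /-- (r5) centrality -/
  v_central_l : ∀ {i j k : G} (g : i ⟶ j) (h : j ⟶ k),
    (v g ▷ H h) ≫ mul g h = mul g h ≫ v (g ≫ h)
  /-- (r5') centrality -/
  v_central_r : ∀ {i j k : G} (g : i ⟶ j) (h : j ⟶ k),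
    (H g ◁ v h) ≫ mul g h = mul g h ≫ v (g ≫ h)
  /-- (b3) naturality of the braiding w.r.t. `v` holds automatically in `C`; copairings: -/
  σ : ∀ i j : G, 𝟙_ C ⟶ H (𝟙 i) ⊗ H (𝟙 j)
  /-- (r6) -/
  σ_diag : ∀ i : G, σ i i =
    η i ≫ v (𝟙 i) ≫ Δ (𝟙 i) ≫
      (vinv (𝟙 i) ⊗ₘ (S (𝟙 i) ≫ eqToHom (by rw [ginv_id]) ≫ vinv (𝟙 i)))
  /-- (r7) -/
  σ_off : ∀ i j : G, i ≠ j → σ i j = (λ_ (𝟙_ C)).inv ≫ (η i ⊗ₘ η j)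
  /-- (r8) `σ` is a Hopf copairing: comultiplicativity in the first variable -/
  cop_Δ_l : ∀ i j : G, σ i j ≫ (Δ (𝟙 i) ▷ H (𝟙 j)) =
    σ i j ≫ (H (𝟙 i) ◁ (λ_ (H (𝟙 j))).inv) ≫ (H (𝟙 i) ◁ (σ i j ▷ H (𝟙 j))) ≫
      (H (𝟙 i) ◁ (α_ (H (𝟙 i)) (H (𝟙 j)) (H (𝟙 j))).hom) ≫
      (H (𝟙 i) ◁ (H (𝟙 i) ◁ (mul (𝟙 j) (𝟙 j) ≫ eqToHom (by rw [Category.id_comp])))) ≫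
      (α_ (H (𝟙 i)) (H (𝟙 i)) (H (𝟙 j))).inv
  /-- (r8') comultiplicativity in the second variable -/
  cop_Δ_r : ∀ i j : G, σ i j ≫ (H (𝟙 i) ◁ Δ (𝟙 j)) =
    σ i j ≫ ((ρ_ (H (𝟙 i))).inv ▷ H (𝟙 j)) ≫ ((H (𝟙 i) ◁ σ i j) ▷ H (𝟙 j)) ≫
      ((α_ (H (𝟙 i)) (H (𝟙 i)) (H (𝟙 j))).inv ▷ H (𝟙 j)) ≫
      (((mul (𝟙 i) (𝟙 i) ≫ eqToHom (by rw [Category.id_comp])) ▷ H (𝟙 j)) ▷ H (𝟙 j)) ≫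
      (α_ (H (𝟙 i)) (H (𝟙 j)) (H (𝟙 j))).hom
  /-- (r9) -/
  cop_ε_l : ∀ i j : G, σ i j ≫ (ε (𝟙 i) ▷ H (𝟙 j)) ≫ (λ_ (H (𝟙 j))).hom = η j
  /-- (r9') -/
  cop_ε_r : ∀ i j : G, σ i j ≫ (H (𝟙 i) ◁ ε (𝟙 j)) ≫ (ρ_ (H (𝟙 i))).hom = η i
  /-- (r10) -/
  r10 : ∀ {s t : G} (g : s ⟶ t),
    vinv g ≫ Δ g =
      Δ g ≫ (β_ (H g) (H g)).inv ≫ (vinv g ⊗ₘ vinv g) ≫ muDef toHopfG σ g g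
  /-- (r11) -/
  r11 : ∀ {a i j b : G} (g : a ⟶ i) (h : j ⟶ b),
    (rhoL toHopfG σ j g ⊗ₘ rhoR toHopfG σ h i) ≫
      (α_ (H (𝟙 j)) (H g) (H h ⊗ H (𝟙 i))).hom ≫
      (H (𝟙 j) ◁ (α_ (H g) (H h) (H (𝟙 i))).inv) ≫
      (H (𝟙 j) ◁ ((muDef toHopfG σ g h ≫ (β_ (H h) (H g)).inv ≫ muDef toHopfG σ h g) ▷
        H (𝟙 i))) ≫
      (H (𝟙 j) ◁ (α_ (H h) (H g) (H (𝟙 i))).hom) ≫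
      (α_ (H (𝟙 j)) (H h) (H g ⊗ H (𝟙 i))).inv ≫
      ((((S (𝟙 j) ≫ eqToHom (by rw [ginv_id])) ▷ H h) ≫ mul (𝟙 j) h ≫
          eqToHom (by rw [Category.id_comp])) ⊗ₘ
        ((H g ◁ (S (𝟙 i) ≫ eqToHom (by rw [ginv_id]))) ≫ mul g (𝟙 i) ≫
          eqToHom (by rw [Category.comp_id]))) =
      (β_ (H g) (H h)).hom

end HopfPaper

namespace HopfPaper

variable {G : Type w₂} [Groupoid.{w₁} G]
variable {C : Type u} [Category.{v} C] [MonoidalCategory C] [BraidedCategory C]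

omit [BraidedCategory C] in
lemma whisker_exchange_unit {A B : C} (f : A ⟶ 𝟙_ C) (g : B ⟶ 𝟙_ C) :
    (f ▷ B) ≫ (λ_ B).hom ≫ g = (A ◁ g) ≫ (ρ_ A).hom ≫ f := by
  rw [← leftUnitor_naturality, ← Category.assoc, ← whisker_exchange]
  simp [unitors_equal]

namespace RibbonG

variable (R : RibbonG G C)

lemma L_comp_v_comp_l (i : G) : R.L (𝟙 i) ≫ R.v (𝟙 i) ≫ R.l i = 𝟙 (𝟙_ C) := by
  rw [← Category.assoc, R.v_L, R.lL]

/-- The twisted antipode `v⁻¹ S` in the second leg of `σ_{i,i}` is absorbed by `l_i v`, after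
which `l_i` on the second leg of `Δ` is a cointegral. -/
lemma σ_diag_comp_l (i : G) :
    R.σ i i ≫ (R.l i ▷ R.H (𝟙 i)) ≫ (λ_ (R.H (𝟙 i))).hom ≫ R.v (𝟙 i) ≫ R.l i =
      R.η i ≫ R.v (𝟙 i) ≫ R.l i ≫ R.η i ≫ R.vinv (𝟙 i) ≫ R.l i := by
  have l_absorbs_twisted_antipode :
      (R.S (𝟙 i) ≫ eqToHom (by rw [ginv_id]) ≫ R.vinv (𝟙 i)) ≫ R.v (𝟙 i) ≫ R.l i = R.l i := by
    simp only [Category.assoc, reassoc_of% R.vinv_v (𝟙 i), R.lS]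
  rw [R.σ_diag i]
  simp only [Category.assoc]
  rw [tensorHom_def', Category.assoc, ← comp_whiskerRight_assoc, whisker_exchange_unit,
    ← whiskerLeft_comp_assoc, l_absorbs_twisted_antipode, reassoc_of% R.l_coint i]

end RibbonG

/-- in a selfdual ribbon Hopf `𝒢`-algebra (axiom (d1)), the normalization
(d2) `l_i ∘ v_{1_i} ∘ η_i = id` implies (d2') `l_i ∘ v_{1_i}⁻¹ ∘ η_i = id`. -/
theorem selfdual_d2_implies_d2' (R : RibbonG G C)
    (d1 : ∀ i : G, R.σ i i ≫ (R.l i ▷ R.H (𝟙 i)) ≫ (λ_ (R.H (𝟙 i))).hom = R.L (𝟙 i))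
    (d2 : ∀ i : G, R.η i ≫ R.v (𝟙 i) ≫ R.l i = 𝟙 (𝟙_ C)) :
    ∀ i : G, R.η i ≫ R.vinv (𝟙 i) ≫ R.l i = 𝟙 (𝟙_ C) := by
  intro i
  calc R.η i ≫ R.vinv (𝟙 i) ≫ R.l i
      = R.η i ≫ R.v (𝟙 i) ≫ R.l i ≫ R.η i ≫ R.vinv (𝟙 i) ≫ R.l i := by
        rw [reassoc_of% d2 i]
    _ = R.L (𝟙 i) ≫ R.v (𝟙 i) ≫ R.l i := by
        rw [← R.σ_diag_comp_l, ← d1 i, Category.assoc, Category.assoc]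
    _ = 𝟙 (𝟙_ C) := R.L_comp_v_comp_l i

end HopfPaper
end

section
/- Let H be a unimodular Hopf 𝒢-algebra in a braided monoidal category equipped with invertible morphisms v_g : H_g → H_g satisfying ε_g ∘ v_g = ε_g (axiom (r2)), S_g ∘ v_g = v_ḡ ∘ S_g, and the centrality conditions m_{g,h} ∘ (v_g ⊗ id) = v_{gh} ∘ m_{g,h} = m_{g,h} ∘ (id ⊗ v_h) for all composable g, h. Then v_g ∘ L_g = L_g for every g ∈ 𝒢 (axiom (r3)). -/
/-!
Centrality makes `v_g` right multiplication by the point `u = v_{1_j} ∘ η_j` of `H_{1_j}`.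
A right integral absorbs right multiplication by `u` up to the scalar `ε(u)`, and
`ε(u) = ε ∘ η = 1` by (r2).
-/

open CategoryTheory MonoidalCategory

universe w₁ w₂ v u

namespace HopfPaper.HopfG

variable {G : Type w₂} [Groupoid.{w₁} G]
variable {C : Type u} [Category.{v} C] [MonoidalCategory C] [BraidedCategory C]
variable (D : HopfG G C)

def rightMul {i j : G} (g : i ⟶ j) (x : 𝟙_ C ⟶ D.H (𝟙 j)) : D.H g ⟶ D.H g :=
  (ρ_ (D.H g)).inv ≫ (D.H g ◁ x) ≫ D.mul g (𝟙 j) ≫ eqToHom (by rw [Category.comp_id])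

lemma rightMul_η {i j : G} (g : i ⟶ j) : D.rightMul g (D.η j) = 𝟙 (D.H g) := by
  rw [rightMul, D.mul_one, Iso.inv_hom_id]

lemma eq_rightMul_of_central (v : ∀ {i j : G} (g : i ⟶ j), D.H g ⟶ D.H g)
    (hv : ∀ {i j k : G} (g : i ⟶ j) (h : j ⟶ k),
      (D.H g ◁ v h) ≫ D.mul g h = D.mul g h ≫ v (g ≫ h))
    {i j : G} (g : i ⟶ j) :
    v g = D.rightMul g (D.η j ≫ v (𝟙 j)) := by
  have hv_eqToHom := eqToHom_naturality (fun f : i ⟶ j => v f) (Category.comp_id g)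
  calc v g = D.rightMul g (D.η j) ≫ v g := by rw [rightMul_η, Category.id_comp]
    _ = D.rightMul g (D.η j ≫ v (𝟙 j)) := by
      simp only [rightMul, Category.assoc, MonoidalCategory.whiskerLeft_comp, hv_eqToHom,
        reassoc_of% hv g (𝟙 j)]

lemma IsRightIntegral.comp_rightMul {L : ∀ {i j : G} (g : i ⟶ j), 𝟙_ C ⟶ D.H g}
    (hL : D.IsRightIntegral L) {i j : G} (g : i ⟶ j) (x : 𝟙_ C ⟶ D.H (𝟙 j)) :
    L g ≫ D.rightMul g x = (x ≫ D.ε (𝟙 j)) ≫ L g := by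
  have interchange : L g ≫ (ρ_ (D.H g)).inv ≫ (D.H g ◁ x) =
      x ≫ (λ_ (D.H (𝟙 j))).inv ≫ (L g ▷ D.H (𝟙 j)) := by
    rw [rightUnitor_inv_naturality_assoc, leftUnitor_inv_naturality_assoc,
      unitors_inv_equal, whisker_exchange]
  calc L g ≫ D.rightMul g x
      = x ≫ ((λ_ (D.H (𝟙 j))).inv ≫ (L g ▷ D.H (𝟙 j)) ≫ D.mul g (𝟙 j)) ≫
          eqToHom (by rw [Category.comp_id]) := by
        simp only [rightMul, reassoc_of% interchange, Category.assoc]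
    _ = (x ≫ D.ε (𝟙 j)) ≫ L g := by
        rw [hL i j j g (𝟙 j)]
        simp

end HopfPaper.HopfG

namespace HopfPaper

open HopfG

variable {G : Type w₂} [Groupoid.{w₁} G]
variable {C : Type u} [Category.{v} C] [MonoidalCategory C] [BraidedCategory C]

/-- for a unimodular Hopf `𝒢`-algebra with invertible `v` satisfying (r2),
`S`-invariance and centrality, the integral is `v`-invariant: `v_g ∘ L_g = L_g` (axiom (r3)). -/
theorem integral_v_invariant
    (D : HopfG G C)
    (L : ∀ {i j : G} (g : i ⟶ j), 𝟙_ C ⟶ D.H g)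
    (hL : D.IsRightIntegral L)
    (v : ∀ {i j : G} (g : i ⟶ j), D.H g ⟶ D.H g)
    (hvε : ∀ {i j : G} (g : i ⟶ j), v g ≫ D.ε g = D.ε g)
    (hvc' : ∀ {i j k : G} (g : i ⟶ j) (h : j ⟶ k),
      (D.H g ◁ v h) ≫ D.mul g h = D.mul g h ≫ v (g ≫ h)) :
    ∀ (i j : G) (g : i ⟶ j), L g ≫ v g = L g := by
  intro i j g
  have hε : (D.η j ≫ v (𝟙 j)) ≫ D.ε (𝟙 j) = 𝟙 (𝟙_ C) := by
    rw [Category.assoc, hvε, D.ε_one]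
  rw [D.eq_rightMul_of_central v hvc' g, hL.comp_rightMul, hε, Category.id_comp]

end HopfPaper
end
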